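/- Let B be an sl₂-crystal (in the sense of a normal/seminormal crystal arising from finite-dimensional U_q(sl₂)-modules), with Kashiwara operators Ẽ, F̃ and statistics φ(b) = max{k : F̃^k b ≠ 0}, ε(b) = max{k : Ẽ^k b ≠ 0}. Define deg(b) := ε(b) if φ(b) is even, and ε(b)+1 if φ(b) is odd; define B̃(b) := Ẽb if φ(b) is even, and F̃b if φ(b) is odd. Then for the tensor product crystal B ⊗ {u₁, u₂} (two-element standard crystal with F̃u₁ = u₂): deg(b ⊗ u₂) = deg(b) + 1; deg(b ⊗ u₁) = deg(b) − 1 if deg(b) > 0 and = 1 if deg(b) = 0; B̃(b ⊗ u₂) = B̃(b) ⊗ u₂ if deg(b) > 0 and = b ⊗ u₁ if deg(b) = 0; and B̃(b ⊗ u₁) = B̃(b) ⊗ u₁ if deg(b) > 1, = 0 if deg(b) = 1, and = b ⊗ u₂ if deg(b) = 0. -/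
import Mathlib


/-- A seminormal `sl₂`-crystal: Kashiwara operators `Ẽ`, `F̃` (valued in `Option`, with
`none` playing the role of `0`) together with the statistics
`ε(b) = max{k : Ẽ^k b ≠ 0}` and `φ(b) = max{k : F̃^k b ≠ 0}`, axiomatized by their
characteristic properties on `sl₂`-strings. -/
structure SL2Crystal (B : Type) where
  etil : B → Option B
  ftil : B → Option B
  eps : B → ℕ
  phi : B → ℕ
  etil_none : ∀ b, etil b = none ↔ eps b = 0
  ftil_none : ∀ b, ftil b = none ↔ phi b = 0
  etil_some : ∀ b b', etil b = some b' → eps b' + 1 = eps b ∧ phi b' = phi b + 1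
  ftil_some : ∀ b b', ftil b = some b' → eps b' = eps b + 1 ∧ phi b' + 1 = phi b
  ftil_etil : ∀ b b', ftil b = some b' ↔ etil b' = some b

namespace SL2Crystal

variable {B : Type} (C : SL2Crystal B)

/-- `deg(b) = ε(b)` if `φ(b)` is even, `ε(b) + 1` if `φ(b)` is odd. -/
def degb (b : B) : ℕ := if Even (C.phi b) then C.eps b else C.eps b + 1

/-- `B̃(b) = Ẽb` if `φ(b)` is even, `F̃b` if `φ(b)` is odd. -/
def btil (b : B) : Option B := if Even (C.phi b) then C.etil b else C.ftil b

/- The tensor product crystal `B ⊗ {u₁, u₂}`, with `false ↦ u₁`, `true ↦ u₂`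
(so `φ(u₁) = 1 = ε(u₂)`, `φ(u₂) = 0 = ε(u₁)`), following the tensor rule (2.2) of the
paper. -/

/-- `φ` of the standard crystal element. -/
def sphi (u : Bool) : ℕ := if u then 0 else 1

/-- `ε` of the standard crystal element. -/
def seps (u : Bool) : ℕ := if u then 1 else 0

/-- `φ(b ⊗ u) = φ(b) + max(0, φ(u) − ε(b))`. -/
def Tphi (x : B × Bool) : ℕ := C.phi x.1 + (sphi x.2 - C.eps x.1)

/-- `ε(b ⊗ u) = ε(u) + max(0, ε(b) − φ(u))`. -/
def Teps (x : B × Bool) : ℕ := seps x.2 + (C.eps x.1 - sphi x.2)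

/-- `F̃(b ⊗ u) = b ⊗ F̃u` if `ε(b) < φ(u)`, else `F̃b ⊗ u`. -/
def Tft (x : B × Bool) : Option (B × Bool) :=
  if C.eps x.1 < sphi x.2 then (if x.2 then none else some (x.1, true))
  else Option.map (fun b' => (b', x.2)) (C.ftil x.1)

/-- `Ẽ(b ⊗ u) = b ⊗ Ẽu` if `ε(b) ≤ φ(u)`, else `Ẽb ⊗ u`. -/
def Tet (x : B × Bool) : Option (B × Bool) :=
  if C.eps x.1 ≤ sphi x.2 then (if x.2 then some (x.1, false) else none)
  else Option.map (fun b' => (b', x.2)) (C.etil x.1)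

/-- `deg` on the tensor product crystal. -/
def Tdeg (x : B × Bool) : ℕ := if Even (C.Tphi x) then C.Teps x else C.Teps x + 1

/-- `B̃` on the tensor product crystal. -/
def Tbtil (x : B × Bool) : Option (B × Bool) :=
  if Even (C.Tphi x) then C.Tet x else C.Tft x

end SL2Crystal

/-- Lemma 5.5/Corollary 5.6 of the paper, crystal version: the behaviour of `deg` and
`B̃` on `B ⊗ {u₁, u₂}` (`false ↦ u₁`, `true ↦ u₂`). -/
theorem statement14 {B : Type} (C : SL2Crystal B) (b : B) :
    C.Tdeg (b, true) = C.degb b + 1 ∧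
    C.Tdeg (b, false) = (if 0 < C.degb b then C.degb b - 1 else 1) ∧
    C.Tbtil (b, true) =
      (if 0 < C.degb b then Option.map (fun b' => (b', true)) (C.btil b)
       else some (b, false)) ∧
    C.Tbtil (b, false) =
      (if 1 < C.degb b then Option.map (fun b' => (b', false)) (C.btil b)
       else if C.degb b = 1 then none else some (b, true)) := by
  simp only [SL2Crystal.Tdeg, SL2Crystal.Tbtil, SL2Crystal.Tphi, SL2Crystal.Teps,
    SL2Crystal.Tet, SL2Crystal.Tft, SL2Crystal.degb, SL2Crystal.btil,
    SL2Crystal.sphi, SL2Crystal.seps, if_true, if_false, Bool.false_eq_true, reduceIte]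
  generalize C.etil b = E
  generalize C.ftil b = F
  obtain ⟨e, he⟩ : ∃ n, C.eps b = n := ⟨_, rfl⟩
  obtain ⟨p, hp⟩ : ∃ n, C.phi b = n := ⟨_, rfl⟩
  simp only [he, hp]
  clear he hp
  have h0 : (0 : ℕ) - e = 0 := Nat.zero_sub e
  have hlt : ¬ e < 0 := Nat.not_lt_zero e
  rw [h0, add_zero, if_neg hlt]
  refine ⟨?_, ?_, ?_, ?_⟩
  · split_ifs <;> omega
  · rcases Nat.eq_zero_or_pos e with h | h
    · subst h
      rcases Nat.even_or_odd p with hpar | hpar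
      · simp [Nat.even_add_one, hpar]
      · simp [Nat.even_add_one, Nat.not_even_iff_odd.mpr hpar]
    · have h1 : 1 - e = 0 := by omega
      rw [h1, add_zero]
      split_ifs <;> omega
  · rcases Nat.even_or_odd p with hpar | hpar
    · rw [if_pos hpar, if_pos hpar, if_pos hpar]
      rcases Nat.eq_zero_or_pos e with h | h
      · rw [if_pos (by omega : e ≤ 0), if_neg (by omega)]
      · rw [if_neg (by omega : ¬ e ≤ 0), if_pos (by omega)]
    · have hpar' : ¬ Even p := Nat.not_even_iff_odd.mpr hpar
      rw [if_neg hpar', if_neg hpar', if_neg hpar', if_pos (by omega)]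
  · rcases Nat.eq_zero_or_pos e with h | h
    · subst h
      rcases Nat.even_or_odd p with hpar | hpar
      · simp [Nat.even_add_one, hpar]
      · simp [Nat.even_add_one, Nat.not_even_iff_odd.mpr hpar]
    · have h1 : 1 - e = 0 := by omega
      rw [h1, add_zero]
      rcases Nat.even_or_odd p with hpar | hpar
      · rcases Nat.lt_or_ge 1 e with h2 | h2
        · simp [hpar, (by omega : ¬ e ≤ 1), h2]
        · have he1 : e = 1 := by omega
          subst he1
          simp [hpar]
      · simp [Nat.not_even_iff_odd.mpr hpar, (by omega : ¬ e < 1),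
          (by omega : 1 < e + 1)]
        exact fun hh => absurd hh (by omega)
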